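/- arXiv:0909.3281 — 2 statements merged into one kernel-verified Lean document; each statement's English description precedes it below -/
import Mathlib

section
/- The Lagrange identity for continued fractions holds: for positive integers a, b, c, d, any integer sequences x and y, and any rational value, [x, a, b, -c, -d, -y] = [x, a, b-1, 1, c-1, d, y] whenever both sides are defined. -/
/-!
Negating every entry of a continued fraction negates its value, so with `w = 1/[d, y]` the tail
`[b, -c, -d, -y]` evaluates to `b - 1/(c + w)`. The tail `[b-1, 1, c-1, d, y]` has the same value,
since `1/(1 + 1/(c - 1 + w)) = 1 - 1/(c + w)`; the common prefix `[x, a]` then sees equal tails.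
-/

/-- Evaluation of a finite continued fraction `[a₁, a₂, …, aₙ] = a₁ + 1/(a₂ + 1/(⋯ + 1/aₙ))`. -/
def cf : List ℤ → ℚ
  | [] => 0
  | a :: l => a + (cf l)⁻¹

/-- A continued fraction is defined when no proper nonempty tail evaluates to `0`
(so no division by zero occurs in its evaluation). -/
def CFDefined (l : List ℤ) : Prop :=
  ∀ t : List ℤ, t ≠ [] → t.length < l.length → t <:+ l → cf t ≠ 0

lemma cf_map_neg (l : List ℤ) : cf (l.map fun e => -e) = -cf l := by
  induction l with
  | nil => simp [cf]
  | cons a l ih =>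
    simp only [List.map_cons, cf, ih, inv_neg, Int.cast_neg]
    ring

lemma cf_append_congr (x : List ℤ) {l₁ l₂ : List ℤ} (h : cf l₁ = cf l₂) :
    cf (x ++ l₁) = cf (x ++ l₂) := by
  induction x with
  | nil => exact h
  | cons a x ih => simp only [List.cons_append, cf, ih]

lemma CFDefined.cf_ne_zero_of_append {p t : List ℤ} (h : CFDefined (p ++ t)) (hp : p ≠ [])
    (ht : t ≠ []) : cf t ≠ 0 :=
  h t ht (by simpa [List.length_pos_iff] using hp) (List.suffix_append p t)

lemma cf_cons_map_neg (b c : ℤ) (z : List ℤ) (h : cf (c :: z) ≠ 0)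
    (h' : cf ((c - 1) :: z) ≠ 0) :
    cf (b :: (c :: z).map fun e => -e) = cf ((b - 1) :: 1 :: (c - 1) :: z) := by
  rw [cf, cf_map_neg]
  simp only [cf] at h h' ⊢
  push_cast at h h' ⊢
  generalize (cf z)⁻¹ = w at h h' ⊢
  have hsum : 1 + (c - 1 + w)⁻¹ = (c + w) / (c - 1 + w) := by
    field_simp
    ring
  rw [hsum, inv_div]
  field_simp
  ring

theorem lagrange_identity_general (a b c d : ℤ) (x y : List ℤ)
    (hL : CFDefined (x ++ [a, b, -c, -d] ++ y.map (fun e => -e)))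
    (hR : CFDefined (x ++ [a, b - 1, 1, c - 1, d] ++ y)) :
    cf (x ++ [a, b, -c, -d] ++ y.map (fun e => -e)) =
      cf (x ++ [a, b - 1, 1, c - 1, d] ++ y) := by
  have hc : cf (c :: d :: y) ≠ 0 := by
    have := CFDefined.cf_ne_zero_of_append (p := x ++ [a, b])
      (t := (c :: d :: y).map fun e => -e) (by simpa using hL) (by simp) (by simp)
    rwa [cf_map_neg, neg_ne_zero] at this
  have hc' : cf ((c - 1) :: d :: y) ≠ 0 :=
    CFDefined.cf_ne_zero_of_append (p := x ++ [a, b - 1, 1]) (by simpa using hR) (by simp)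
      (by simp)
  simpa using cf_append_congr (x ++ [a]) (cf_cons_map_neg b c (d :: y) hc hc')

/-- Lagrange identity: `[x, a, b, -c, -d, -y] = [x, a, b-1, 1, c-1, d, y]`
whenever both sides are defined. -/
theorem lagrange_identity (a b c d : ℤ) (ha : 0 < a) (hb : 0 < b) (hc : 0 < c)
    (hd : 0 < d) (x y : List ℤ)
    (hL : CFDefined (x ++ [a, b, -c, -d] ++ y.map (fun e => -e)))
    (hR : CFDefined (x ++ [a, b - 1, 1, c - 1, d] ++ y)) :
    cf (x ++ [a, b, -c, -d] ++ y.map (fun e => -e)) =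
      cf (x ++ [a, b - 1, 1, c - 1, d] ++ y) :=
  lagrange_identity_general a b c d x y hL hR
end

section
/- Let [e_1, ..., e_n] with e_i = ±1 be a 1-regular continued fraction equal to α/β (in lowest terms, α, β > 0). Then: n ≡ 2 (mod 3) iff α is even and β is odd; n ≡ 0 (mod 3) iff α is odd and β is even; n ≡ 1 (mod 3) iff α and β are both odd. -/
/-- A continued fraction `[a₁, …, aₙ]` is 1-regular: all entries are nonzero,
`a_{n-1} aₙ > 0`, and there are no two consecutive sign changes. -/
def OneRegular (l : List ℤ) : Prop :=
  (∀ a ∈ l, a ≠ 0) ∧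
  (2 ≤ l.length → 0 < l[l.length - 2]! * l[l.length - 1]!) ∧
  (∀ i, i + 2 < l.length → l[i]! * l[i + 1]! < 0 → 0 < l[i + 1]! * l[i + 2]!)

theorem mul_cf_cons_of_sq_eq_one {a : ℤ} (ha : a * a = 1) (l : List ℤ) :
    a * cf (a :: l) = 1 + (a * cf l)⁻¹ := by
  have ha' : (a : ℚ) * a = 1 := by exact_mod_cast ha
  rw [cf, mul_add, ha', mul_inv, inv_eq_of_mul_eq_one_right ha']

def numDen : List ℤ → ℤ × ℤ
  | [] => (1, 0)
  | a :: l => (a * (numDen l).1 + (numDen l).2, (numDen l).1)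

theorem isCoprime_numDen (l : List ℤ) : IsCoprime (numDen l).1 (numDen l).2 := by
  induction l with
  | nil => exact isCoprime_one_left
  | cons a l ih => simpa [numDen, add_comm] using ih.symm.add_mul_left_left a

theorem numDen_parity {l : List ℤ} (hodd : ∀ e ∈ l, Odd e) :
    (l.length % 3 = 2 ↔ Even (numDen l).1 ∧ Odd (numDen l).2) ∧
    (l.length % 3 = 0 ↔ Odd (numDen l).1 ∧ Even (numDen l).2) ∧
    (l.length % 3 = 1 ↔ Odd (numDen l).1 ∧ Odd (numDen l).2) := by
  induction l with
  | nil => simp [numDen]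
  | cons a l ih =>
    have ha : ¬Even a := Int.not_even_iff_odd.mpr (hodd a (by simp))
    specialize ih (fun e he => hodd e (List.mem_cons_of_mem _ he))
    simp only [numDen, List.length_cons, ← Int.not_even_iff_odd, Int.even_add, Int.even_mul, ha,
      false_or] at ih ⊢
    simp only [Int.even_iff] at ih ⊢
    omega

theorem IsCoprime.natAbs_eq_of_mul_eq_mul {a b c d : ℤ} (hab : IsCoprime a b)
    (hcd : IsCoprime c d) (h : a * d = c * b) : a.natAbs = c.natAbs ∧ b.natAbs = d.natAbs :=
  ⟨Int.natAbs_eq_of_dvd_dvd (hab.dvd_of_dvd_mul_right ⟨d, h.symm⟩)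
      (hcd.dvd_of_dvd_mul_right ⟨b, h⟩),
    Int.natAbs_eq_of_dvd_dvd (hab.symm.dvd_of_dvd_mul_right ⟨c, by linear_combination h⟩)
      (hcd.symm.dvd_of_dvd_mul_right ⟨a, by linear_combination -h⟩)⟩

namespace OneRegular

variable {a b c : ℤ} {l : List ℤ}

theorem tail (h : OneRegular (a :: l)) : OneRegular l := by
  obtain ⟨hne, hlast, hchange⟩ := h
  refine ⟨fun x hx => hne x (List.mem_cons_of_mem _ hx), fun hlen => ?_, fun i hi hab => ?_⟩
  · obtain ⟨k, hk⟩ : ∃ k, l.length = k + 2 := ⟨l.length - 2, by omega⟩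
    simpa [hk] using hlast (by simp; omega)
  · simpa using hchange (i + 1) (by simp; omega) (by simpa using hab)

theorem pair_mul_pos (h : OneRegular [a, b]) : 0 < a * b := by
  simpa using h.2.1 (by simp)

theorem mul_pos_of_mul_neg (h : OneRegular (a :: b :: c :: l)) (hab : a * b < 0) : 0 < b * c := by
  simpa using h.2.2 0 (by simp) (by simpa using hab)

theorem mul_cf_pos (hpm : ∀ e ∈ a :: l, e = 1 ∨ e = -1)
    (hreg : OneRegular (a :: l)) :
    0 < a * cf (a :: l) ∧ (l.head? = some a → 1 < a * cf (a :: l)) := by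
  induction l generalizing a with
  | nil =>
    rcases hpm a (by simp) with rfl | rfl <;> simp [cf]
  | cons b l ih =>
    have hsq : a * a = 1 := by rcases hpm a (by simp) with rfl | rfl <;> rfl
    obtain ⟨hpos, hlt⟩ := ih (fun e he => hpm e (List.mem_cons_of_mem _ he)) hreg.tail
    rw [mul_cf_cons_of_sq_eq_one hsq]
    obtain rfl | rfl : b = a ∨ b = -a := by
      rcases hpm a (by simp) with rfl | rfl <;> rcases hpm b (by simp) with rfl | rfl <;> simp
    · have h : 1 < 1 + (b * cf (b :: l))⁻¹ := lt_add_of_pos_right _ (inv_pos.mpr hpos)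
      exact ⟨one_pos.trans h, fun _ => h⟩
    · -- by 1-regularity the sign change is followed by an entry of the same sign
      have hchange : 1 < ((-a : ℤ) : ℚ) * cf (-a :: l) := by
        cases l with
        | nil => nlinarith [hreg.pair_mul_pos]
        | cons c l =>
          have hc : 0 < -a * c := hreg.mul_pos_of_mul_neg (by linarith)
          obtain rfl : c = -a := by
            rcases hpm a (by simp) with rfl | rfl <;> rcases hpm c (by simp) with rfl | rfl <;>
              simp_all
          exact hlt rfl
      have hinv : -1 < (a * cf (-a :: l))⁻¹ := by
        have h : 1 < -(a * cf (-a :: l)) := by push_cast at hchange; linarith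
        have h' := inv_lt_one_of_one_lt₀ h
        rw [inv_neg] at h'
        linarith
      refine ⟨by linarith, fun h => ?_⟩
      have hneg : -a = a := by simpa using h
      nlinarith

theorem cf_eq_numDen (hpm : ∀ e ∈ l, e = 1 ∨ e = -1) (hreg : OneRegular l) :
    cf l = (numDen l).1 / (numDen l).2 := by
  induction l with
  | nil => simp [cf, numDen]
  | cons a l ih =>
    specialize ih (fun e he => hpm e (List.mem_cons_of_mem _ he)) hreg.tail
    have hnum : ((numDen l).1 : ℚ) ≠ 0 := by
      cases l with
      | nil => simp [numDen]
      | cons b l =>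
        intro h0
        have hpos := (hreg.tail.mul_cf_pos fun e he => hpm e (List.mem_cons_of_mem _ he)).1
        rw [ih, h0, zero_div, mul_zero] at hpos
        exact hpos.false
    rw [cf, ih, numDen, inv_div]
    push_cast
    rw [add_div, mul_div_cancel_right₀ _ hnum]

end OneRegular

theorem length_mod_three_parity (l : List ℤ) (hpm : ∀ e ∈ l, e = 1 ∨ e = -1)
    (hreg : OneRegular l) (α β : ℤ) (hα : 0 < α) (hβ : 0 < β)
    (hcop : IsCoprime α β) (hval : cf l = (α : ℚ) / β) :
    (l.length % 3 = 2 ↔ Even α ∧ Odd β) ∧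
    (l.length % 3 = 0 ↔ Odd α ∧ Even β) ∧
    (l.length % 3 = 1 ↔ Odd α ∧ Odd β) := by
  have hcf := hreg.cf_eq_numDen hpm
  have hpar := numDen_parity fun e he => (hpm e he).elim (· ▸ odd_one) (· ▸ odd_neg_one)
  have hcop' := isCoprime_numDen l
  generalize numDen l = pq at hcf hpar hcop'
  obtain ⟨p, q⟩ := pq
  have hq0 : (q : ℚ) ≠ 0 := by
    intro hq0
    rw [hq0, div_zero, hval] at hcf
    exact (div_pos (Int.cast_pos.mpr hα) (Int.cast_pos.mpr hβ)).ne' hcf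
  have hcross : p * β = α * q := by
    rw [hcf, div_eq_div_iff hq0 (by positivity)] at hval
    exact_mod_cast hval
  obtain ⟨hpα, hqβ⟩ := hcop'.natAbs_eq_of_mul_eq_mul hcop hcross
  simpa only [← Int.natAbs_even, ← Int.natAbs_odd, hpα, hqβ] using hpar
end
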